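/- arXiv:1812.07079 — 6 statements merged into one kernel-verified Lean document; each statement's English description precedes it below -/
import Mathlib

section
/- Filtration Lemma: Let M = (W,D,N,V) be a quasi-notional doxastic model, let Σ ⊆ L be a finite set of formulas closed under subformulas, and let M_Σ be the filtration of M through Σ. Then for every formula φ ∈ Σ and every world w ∈ W, (M,w) ⊨ φ if and only if (M_Σ, |w|_Σ) ⊨ φ. -/
namespace LDAPaper

/-- Formulas over atomic propositions `ℕ` and agents `Agt`.
`expbel i α` is the explicit belief operator `△ᵢ α`; `impbel i φ` is the implicit
belief operator `□ᵢ φ`. -/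
inductive Frm (Agt : Type) : Type
  | atom : ℕ → Frm Agt
  | neg : Frm Agt → Frm Agt
  | and : Frm Agt → Frm Agt → Frm Agt
  | expbel : Agt → Frm Agt → Frm Agt
  | impbel : Agt → Frm Agt → Frm Agt

namespace Frm

variable {Agt : Type}

/-- Membership in the sublanguage `L0` (no implicit-belief operator). -/
def isL0 : Frm Agt → Prop
  | atom _ => True
  | neg α => isL0 α
  | and α β => isL0 α ∧ isL0 β
  | expbel _ α => isL0 α
  | impbel _ _ => False

/-- Membership in the language `L`: the explicit belief operator applies only to
`L0`-formulas. -/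
def isL : Frm Agt → Prop
  | atom _ => True
  | neg φ => isL φ
  | and φ ψ => isL φ ∧ isL ψ
  | expbel _ α => isL0 α
  | impbel _ φ => isL φ

/-- Material implication, defined from `¬` and `∧` as usual. -/
def imp (φ ψ : Frm Agt) : Frm Agt := neg (and φ (neg ψ))

/-- Disjunction, defined from `¬` and `∧` as usual. -/
def or (φ ψ : Frm Agt) : Frm Agt := neg (and (neg φ) (neg ψ))

/-- Biconditional, defined from `¬` and `∧` as usual. -/
def iff (φ ψ : Frm Agt) : Frm Agt := and (imp φ ψ) (imp ψ φ)

/-- The set of atomic propositions occurring in a formula. -/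
def atomsOf : Frm Agt → Set ℕ
  | atom p => {p}
  | neg φ => atomsOf φ
  | and φ ψ => atomsOf φ ∪ atomsOf ψ
  | expbel _ φ => atomsOf φ
  | impbel _ φ => atomsOf φ

end Frm

/-- A model `(W, D, N, V)`: worlds, doxastic function, notional function, valuation. -/
structure PreNDM (Agt : Type) where
  W : Type
  D : Agt → W → Set (Frm Agt)
  N : Agt → W → Set W
  V : ℕ → Set W

namespace PreNDM

variable {Agt : Type}

/-- Truth of a formula at a world of a model. -/
def sat (M : PreNDM Agt) : M.W → Frm Agt → Prop
  | w, .atom p => w ∈ M.V p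
  | w, .neg φ => ¬ sat M w φ
  | w, .and φ ψ => sat M w φ ∧ sat M w ψ
  | w, .expbel i α => α ∈ M.D i w
  | w, .impbel i φ => ∀ v ∈ M.N i w, sat M v φ

end PreNDM

/-- Quasi-notional doxastic model: belief bases consist of `L0`-formulas,
(C1*) `N(i,w) ⊆ ∩_{α ∈ D(i,w)} ‖α‖`, and (C2) `N(i,w) ≠ ∅`. -/
def isQNDM {Agt : Type} (M : PreNDM Agt) : Prop :=
  (∀ i w, ∀ α ∈ M.D i w, α.isL0) ∧
  (∀ i w, ∀ v ∈ M.N i w, ∀ α ∈ M.D i w, M.sat v α) ∧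
  (∀ i w, (M.N i w).Nonempty)

/-- Notional doxastic model: belief bases consist of `L0`-formulas,
(C1) `N(i,w) = ∩_{α ∈ D(i,w)} ‖α‖`, and (C2) `N(i,w) ≠ ∅`. -/
def isNDM {Agt : Type} (M : PreNDM Agt) : Prop :=
  (∀ i w, ∀ α ∈ M.D i w, α.isL0) ∧
  (∀ i w, M.N i w = {v | ∀ α ∈ M.D i w, M.sat v α}) ∧
  (∀ i w, (M.N i w).Nonempty)

/-- A model is finite iff `W` is finite and every `D(i,w)` and every
`{p ∈ Atm : w ∈ V(p)}` is finite. -/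
def finiteModel {Agt : Type} (M : PreNDM Agt) : Prop :=
  Finite M.W ∧ (∀ i w, (M.D i w).Finite) ∧ (∀ w, {p : ℕ | w ∈ M.V p}.Finite)

end LDAPaper
namespace LDAPaper

/-- A multi-agent belief base `B = (B_1,…,B_n, V)`. -/
structure MABase (Agt : Type) where
  B : Agt → Set (Frm Agt)
  V : Set ℕ

namespace MABase

variable {Agt : Type}

/-- Satisfaction of `L0`-formulas by a multi-agent belief base. -/
def bsat (b : MABase Agt) : Frm Agt → Prop
  | .atom p => p ∈ b.V
  | .neg α => ¬ bsat b α
  | .and α β => bsat b α ∧ bsat b β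
  | .expbel i α => α ∈ b.B i
  | .impbel _ _ => True

/-- Well-formedness: each agent's belief base consists of `L0`-formulas. -/
def wf (b : MABase Agt) : Prop := ∀ i, ∀ α ∈ b.B i, α.isL0

/-- Doxastic alternative relation: `b R_i b'` iff `b'` satisfies every formula in
agent `i`'s belief base in `b`. -/
def R (i : Agt) (b b' : MABase Agt) : Prop := ∀ α ∈ b.B i, bsat b' α

end MABase

/-- Satisfaction of `L`-formulas by a multi-agent belief model `(b, Cxt)`. -/
def msat {Agt : Type} (Cxt : Set (MABase Agt)) : MABase Agt → Frm Agt → Prop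
  | b, .atom p => p ∈ b.V
  | b, .neg φ => ¬ msat Cxt b φ
  | b, .and φ ψ => msat Cxt b φ ∧ msat Cxt b ψ
  | b, .expbel i α => α ∈ b.B i
  | b, .impbel i φ => ∀ b' ∈ Cxt, MABase.R i b b' → msat Cxt b' φ

/-- Consistent multi-agent belief model: all bases involved are well formed and
for every agent `i` and every `b' ∈ Cxt ∪ {b}` there is `b'' ∈ Cxt` with `b' R_i b''`. -/
def isCMAB {Agt : Type} (b : MABase Agt) (Cxt : Set (MABase Agt)) : Prop :=
  (∀ b' ∈ insert b Cxt, b'.wf) ∧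
  (∀ i : Agt, ∀ b' ∈ insert b Cxt, ∃ b'' ∈ Cxt, MABase.R i b' b'')

/-- Boolean evaluation of a formula, treating atoms, explicit-belief formulas and
implicit-belief formulas as propositional atoms. -/
def boolEval {Agt : Type} (v : Frm Agt → Bool) : Frm Agt → Bool
  | .neg φ => ! boolEval v φ
  | .and φ ψ => boolEval v φ && boolEval v ψ
  | φ => v φ

/-- Instances of classical propositional tautologies. -/
def Tautology {Agt : Type} (φ : Frm Agt) : Prop :=
  ∀ v : Frm Agt → Bool, boolEval v φ = true

/-- Derivability in the logic LDA: classical propositional logic over `L` plus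
axioms K, D, Int and the necessitation rule for implicit belief. -/
inductive LDA {Agt : Type} : Frm Agt → Prop
  | taut {φ : Frm Agt} : φ.isL → Tautology φ → LDA φ
  | axK (i : Agt) {φ ψ : Frm Agt} : φ.isL → ψ.isL →
      LDA (((Frm.impbel i φ).and (Frm.impbel i (φ.imp ψ))).imp (Frm.impbel i ψ))
  | axD (i : Agt) {φ : Frm Agt} : φ.isL →
      LDA (Frm.neg ((Frm.impbel i φ).and (Frm.impbel i (Frm.neg φ))))
  | axInt (i : Agt) {α : Frm Agt} : α.isL0 →
      LDA ((Frm.expbel i α).imp (Frm.impbel i α))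
  | mp {φ ψ : Frm Agt} : LDA (φ.imp ψ) → LDA φ → LDA ψ
  | nec (i : Agt) {φ : Frm Agt} : LDA φ → LDA (Frm.impbel i φ)

/-- Conjunction of a list of formulas (the empty conjunction is a tautology). -/
def conjList {Agt : Type} : List (Frm Agt) → Frm Agt
  | [] => Frm.neg ((Frm.atom 0).and (Frm.neg (Frm.atom 0)))
  | φ :: l => φ.and (conjList l)

/-- A set of formulas is LDA-consistent iff no contradiction is derivable in LDA
from finitely many of its members. -/
def Consistent {Agt : Type} (Δ : Set (Frm Agt)) : Prop :=
  ∀ l : List (Frm Agt), (∀ ψ ∈ l, ψ ∈ Δ) → ¬ LDA (Frm.neg (conjList l))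

/-- Maximally LDA-consistent set of `L`-formulas. -/
def MCS {Agt : Type} (Γ : Set (Frm Agt)) : Prop :=
  (∀ φ ∈ Γ, φ.isL) ∧ Consistent Γ ∧
    ∀ Δ : Set (Frm Agt), (∀ φ ∈ Δ, φ.isL) → Consistent Δ → Γ ⊆ Δ → Δ = Γ

/-- Canonical doxastic function: `α ∈ D^c(i,w)` iff `△ᵢα ∈ w`. -/
def canonD {Agt : Type} (i : Agt) (w : {Γ : Set (Frm Agt) // MCS Γ}) : Set (Frm Agt) :=
  {α | Frm.expbel i α ∈ w.val}

/-- Canonical notional function: `v ∈ N^c(i,w)` iff `□ᵢφ ∈ w` implies `φ ∈ v`. -/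
def canonN {Agt : Type} (i : Agt) (w : {Γ : Set (Frm Agt) // MCS Γ}) :
    Set {Γ : Set (Frm Agt) // MCS Γ} :=
  {v | ∀ φ : Frm Agt, Frm.impbel i φ ∈ w.val → φ ∈ v.val}

/-- Canonical valuation: `w ∈ V^c(p)` iff `p ∈ w`. -/
def canonV {Agt : Type} (p : ℕ) : Set {Γ : Set (Frm Agt) // MCS Γ} :=
  {w | Frm.atom p ∈ w.val}

/-- The canonical model of LDA: worlds are the maximally LDA-consistent sets. -/
def canonM (Agt : Type) : PreNDM Agt where
  W := {Γ : Set (Frm Agt) // MCS Γ}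
  D := canonD
  N := canonN
  V := canonV

/-- `w ≡_Σ v` iff `w` and `v` satisfy the same formulas of `Σ`. -/
def filtRel {Agt : Type} (M : PreNDM Agt) (S : Set (Frm Agt)) (w v : M.W) : Prop :=
  ∀ φ ∈ S, (M.sat w φ ↔ M.sat v φ)

/-- The setoid of `≡_Σ`-equivalent worlds. -/
def filtSetoid {Agt : Type} (M : PreNDM Agt) (S : Set (Frm Agt)) : Setoid M.W where
  r := filtRel M S
  iseqv := ⟨fun _ _ _ => Iff.rfl, fun h φ hφ => (h φ hφ).symm,
    fun h1 h2 φ hφ => (h1 φ hφ).trans (h2 φ hφ)⟩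

/-- The `≡_Σ`-equivalence class `|w|_Σ` of a world `w`. -/
def filtMk {Agt : Type} (M : PreNDM Agt) (S : Set (Frm Agt)) (w : M.W) :
    Quotient (filtSetoid M S) :=
  Quotient.mk (filtSetoid M S) w

/-- Closure under subformulas. -/
def SubClosed {Agt : Type} (S : Set (Frm Agt)) : Prop :=
  (∀ φ : Frm Agt, Frm.neg φ ∈ S → φ ∈ S) ∧
  (∀ φ ψ : Frm Agt, Frm.and φ ψ ∈ S → φ ∈ S ∧ ψ ∈ S) ∧
  (∀ (i : Agt) (φ : Frm Agt), Frm.expbel i φ ∈ S → φ ∈ S) ∧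
  (∀ (i : Agt) (φ : Frm Agt), Frm.impbel i φ ∈ S → φ ∈ S)

/-- The filtration `M_Σ = (W_Σ, D_Σ, N_Σ, V_Σ)` of `M` through `Σ`:
`W_Σ` is the quotient of `W` by `≡_Σ`;
`D_Σ(i,|w|) = (∩_{v ∈ |w|} D(i,v)) ∩ Σ`;
`N_Σ(i,|w|) = {|v| : v ∈ N(i,w)}` (smallest filtration);
`V_Σ(p) = {|w| : (M,w) ⊨ p}` if `p` occurs in `Σ`, and `∅` otherwise. -/
def filtModel {Agt : Type} (M : PreNDM Agt) (S : Set (Frm Agt)) : PreNDM Agt where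
  W := Quotient (filtSetoid M S)
  D := fun i x => {α | α ∈ S ∧ ∀ v : M.W, filtMk M S v = x → α ∈ M.D i v}
  N := fun i x => {y | ∃ w v : M.W, filtMk M S w = x ∧ filtMk M S v = y ∧ v ∈ M.N i w}
  V := fun p =>
    {x | (∃ φ ∈ S, p ∈ φ.atomsOf) ∧ ∃ w : M.W, filtMk M S w = x ∧ M.sat w (Frm.atom p)}

/-- The language of Fagin & Halpern's logic of general awareness:
`bel` is implicit belief `B_i`, `aware` is awareness `A_i`, `expk` is explicit
belief `X_i`. -/
inductive LGA (Agt : Type) : Type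
  | atom : ℕ → LGA Agt
  | neg : LGA Agt → LGA Agt
  | and : LGA Agt → LGA Agt → LGA Agt
  | bel : Agt → LGA Agt → LGA Agt
  | aware : Agt → LGA Agt → LGA Agt
  | expk : Agt → LGA Agt → LGA Agt

/-- An awareness structure `(S, R_1,…,R_n, A_1,…,A_n, π)`. -/
structure AwStruct (Agt : Type) where
  S : Type
  R : Agt → S → S → Prop
  A : Agt → S → Set (LGA Agt)
  val : ℕ → Set S

namespace AwStruct

variable {Agt : Type}

/-- Truth in an awareness structure; `X_i φ` holds iff both `B_i φ` and `A_i φ` hold. -/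
def sat (M : AwStruct Agt) : M.S → LGA Agt → Prop
  | s, .atom p => s ∈ M.val p
  | s, .neg φ => ¬ sat M s φ
  | s, .and φ ψ => sat M s φ ∧ sat M s ψ
  | s, .bel i φ => ∀ t, M.R i s t → sat M t φ
  | s, .aware i φ => φ ∈ M.A i s
  | s, .expk i φ => (∀ t, M.R i s t → sat M t φ) ∧ φ ∈ M.A i s

/-- An awareness structure is serial iff every `R_i` is serial. -/
def serial (M : AwStruct Agt) : Prop := ∀ i s, ∃ t, M.R i s t

end AwStruct

/-- The translation `tr` from `L` to the language of general awareness. -/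
def tr {Agt : Type} : Frm Agt → LGA Agt
  | .atom p => .atom p
  | .neg φ => .neg (tr φ)
  | .and φ ψ => .and (tr φ) (tr ψ)
  | .expbel i α => .expk i (tr α)
  | .impbel i φ => .bel i (tr φ)

end LDAPaper

namespace LDAPaper

/-- **Filtration Lemma.** For a quasi-NDM `M`, a finite subformula-closed set
`Σ ⊆ L`, every `φ ∈ Σ` and every world `w`: `(M,w) ⊨ φ` iff `(M_Σ,|w|_Σ) ⊨ φ`. -/
theorem filtration_lemma (Agt : Type) [Fintype Agt] (M : PreNDM Agt) (hM : isQNDM M)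
    (S : Set (Frm Agt)) (hfin : S.Finite) (hSL : ∀ φ ∈ S, φ.isL) (hsub : SubClosed S) :
    ∀ φ ∈ S, ∀ w : M.W, M.sat w φ ↔ (filtModel M S).sat (filtMk M S w) φ := by
  intro φ
  induction φ with
  | atom p =>
    intro hφ w
    constructor
    · intro h
      exact ⟨⟨Frm.atom p, hφ, rfl⟩, w, rfl, h⟩
    · rintro ⟨-, w', hw', hsat⟩
      have hr : filtRel M S w' w := Quotient.exact hw'
      exact (hr _ hφ).mp hsat
  | neg ψ ih =>
    intro hφ w
    have hψ := hsub.1 ψ hφ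
    simpa [PreNDM.sat] using not_congr (ih hψ w)
  | and ψ χ ih1 ih2 =>
    intro hφ w
    obtain ⟨h1, h2⟩ := hsub.2.1 ψ χ hφ
    simpa [PreNDM.sat] using and_congr (ih1 h1 w) (ih2 h2 w)
  | expbel i α ih =>
    intro hφ w
    have hα : α ∈ S := hsub.2.2.1 i α hφ
    show α ∈ M.D i w ↔ α ∈ (filtModel M S).D i (filtMk M S w)
    constructor
    · intro h
      refine ⟨hα, fun v hv => ?_⟩
      have hr : filtRel M S v w := Quotient.exact hv
      exact (hr _ hφ).mpr h
    · rintro ⟨-, h⟩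
      exact h w rfl
  | impbel i ψ ih =>
    intro hφ w
    have hψ : ψ ∈ S := hsub.2.2.2 i ψ hφ
    constructor
    · intro h y hy
      obtain ⟨w', v', hw', hv', hmem⟩ := hy
      have hr : filtRel M S w' w := Quotient.exact hw'
      have hw'sat : M.sat w' (Frm.impbel i ψ) := (hr _ hφ).mpr h
      have hv'sat : M.sat v' ψ := hw'sat v' hmem
      rw [← hv']
      exact (ih hψ v').mp hv'sat
    · intro h v hv
      have : (filtModel M S).sat (filtMk M S v) ψ :=
        h (filtMk M S v) ⟨w, v, rfl, rfl, hv⟩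
      exact (ih hψ v).mpr this

end LDAPaper
end

section
/- Let M = (W,D,N,V) be a quasi-notional doxastic model and let Σ ⊆ L be a finite set of formulas closed under subformulas. Then the filtration M_Σ = (W_Σ, D_Σ, N_Σ, V_Σ) of M through Σ is a finite quasi-notional doxastic model; in particular it satisfies conditions (C1*) and (C2), W_Σ is finite, and each D_Σ(i,|w|_Σ) and each set {p ∈ Atm : |w|_Σ ∈ V_Σ(p)} is finite. -/
namespace LDAPaper

lemma atomsOf_finite {Agt : Type} (φ : Frm Agt) : φ.atomsOf.Finite := by
  induction φ with
  | atom p => exact Set.finite_singleton p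
  | neg φ ih => exact ih
  | and φ ψ ih1 ih2 => exact ih1.union ih2
  | expbel i φ ih => exact ih
  | impbel i φ ih => exact ih

lemma filt_sat_L0 {Agt : Type} (M : PreNDM Agt) (S : Set (Frm Agt))
    (hsub : SubClosed S) :
    ∀ φ : Frm Agt, φ.isL0 → φ ∈ S → ∀ w : M.W,
      ((filtModel M S).sat (filtMk M S w) φ ↔ M.sat w φ) := by
  intro φ
  induction φ with
  | atom p =>
    intro _ hS w
    constructor
    · rintro ⟨-, v, hv, hsat⟩
      exact ((Quotient.exact hv) (.atom p) hS).mp hsat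
    · intro h
      exact ⟨⟨.atom p, hS, rfl⟩, w, rfl, h⟩
  | neg φ ih =>
    intro hL0 hS w
    have hφS := hsub.1 φ hS
    simp only [PreNDM.sat]
    exact not_congr (ih hL0 hφS w)
  | and φ ψ ih1 ih2 =>
    intro hL0 hS w
    obtain ⟨h1, h2⟩ := hsub.2.1 φ ψ hS
    simp only [PreNDM.sat]
    exact and_congr (ih1 hL0.1 h1 w) (ih2 hL0.2 h2 w)
  | expbel i φ ih =>
    intro hL0 hS w
    constructor
    · rintro ⟨-, h⟩
      exact h w rfl
    · intro h
      refine ⟨hsub.2.2.1 i φ hS, fun v hv => ?_⟩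
      exact ((Quotient.exact hv) (.expbel i φ) hS).mpr h
  | impbel i φ ih =>
    intro h
    exact absurd h id

/-- The filtration `M_Σ` of a quasi-NDM `M` through a finite subformula-closed set
`Σ ⊆ L` is a finite quasi-NDM: it satisfies (C1*) and (C2), its set of worlds is
finite, and each `D_Σ(i,|w|)` and each `{p : |w| ∈ V_Σ(p)}` is finite. -/
theorem filtration_is_finite_qndm (Agt : Type) [Fintype Agt] (M : PreNDM Agt)
    (hM : isQNDM M) (S : Set (Frm Agt)) (hfin : S.Finite) (hSL : ∀ φ ∈ S, φ.isL)
    (hsub : SubClosed S) :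
    isQNDM (filtModel M S) ∧ finiteModel (filtModel M S) := by
  obtain ⟨hD0, hC1, hC2⟩ := hM
  refine ⟨⟨?_, ?_, ?_⟩, ?_, ?_, ?_⟩
  · -- belief bases contain only L0 formulas
    intro i x α hα
    obtain ⟨w, rfl⟩ := Quotient.exists_rep x
    exact hD0 i w α (hα.2 w rfl)
  · -- (C1*)
    rintro i x y ⟨w, u, hw, hu, huN⟩ α ⟨hαS, hαD⟩
    subst hu
    have hαw : α ∈ M.D i w := hαD w hw
    have hα0 : α.isL0 := hD0 i w α hαw
    exact (filt_sat_L0 M S hsub α hα0 hαS u).mpr (hC1 i w u huN α hαw)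
  · -- (C2)
    intro i x
    obtain ⟨w, rfl⟩ := Quotient.exists_rep x
    obtain ⟨v, hv⟩ := hC2 i w
    exact ⟨filtMk M S v, w, v, rfl, rfl, hv⟩
  · -- W_Σ finite
    have : Finite S := hfin.to_subtype
    have hinj : Function.Injective
        (fun x : Quotient (filtSetoid M S) =>
          Quotient.lift (fun w => (fun φ : S => M.sat w φ.val))
            (fun a b hab => funext fun φ => propext ((show filtRel M S a b from hab) φ.val φ.prop)) x) := by
      intro x y hxy
      induction x using Quotient.ind
      induction y using Quotient.ind
      apply Quotient.sound
      intro φ hφ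
      exact iff_of_eq (congrFun hxy ⟨φ, hφ⟩)
    exact Finite.of_injective _ hinj
  · -- D_Σ finite
    intro i x
    exact hfin.subset fun α hα => hα.1
  · -- atoms true at a world finite
    intro x
    have hsub' : {p : ℕ | x ∈ (filtModel M S).V p} ⊆ ⋃ φ ∈ S, φ.atomsOf := by
      rintro p ⟨⟨φ, hφS, hp⟩, -⟩
      exact Set.mem_biUnion hφS hp
    exact (Set.Finite.biUnion hfin fun φ _ => atomsOf_finite φ).subset hsub'

end LDAPaper
end

section
/- Finite model property for quasi-NDMs: A formula φ ∈ L is satisfiable for the class of quasi-notional doxastic models if and only if φ is satisfiable for the class of finite quasi-notional doxastic models. -/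
namespace LDAPaper

namespace FMPAux

variable {Agt : Type}

/-- Subformulas. -/
def sub : Frm Agt → Set (Frm Agt)
  | .atom p => {.atom p}
  | .neg ψ => insert (.neg ψ) (sub ψ)
  | .and ψ χ => insert (.and ψ χ) (sub ψ ∪ sub χ)
  | .expbel i ψ => insert (.expbel i ψ) (sub ψ)
  | .impbel i ψ => insert (.impbel i ψ) (sub ψ)

lemma self_mem_sub (φ : Frm Agt) : φ ∈ sub φ := by
  cases φ <;> simp [sub]

lemma sub_finite (φ : Frm Agt) : (sub φ).Finite := by
  induction φ with
  | atom p => simp [sub]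
  | neg ψ ih => exact ih.insert _
  | and ψ χ ih1 ih2 => exact (ih1.union ih2).insert _
  | expbel i ψ ih => exact ih.insert _
  | impbel i ψ ih => exact ih.insert _

lemma sub_trans : ∀ φ ψ : Frm Agt, ψ ∈ sub φ → sub ψ ⊆ sub φ := by
  intro φ
  induction φ with
  | atom p =>
    intro ψ h; simp only [sub, Set.mem_singleton_iff] at h; subst h
    exact subset_rfl
  | neg χ ih =>
    intro ψ h
    rcases Set.mem_insert_iff.mp h with rfl | h
    · exact subset_rfl
    · exact (ih ψ h).trans (Set.subset_insert _ _)
  | and χ₁ χ₂ ih1 ih2 =>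
    intro ψ h
    rcases Set.mem_insert_iff.mp h with rfl | h
    · exact subset_rfl
    · rcases h with h | h
      · exact (ih1 ψ h).trans (Set.subset_union_left.trans (Set.subset_insert _ _))
      · exact (ih2 ψ h).trans (Set.subset_union_right.trans (Set.subset_insert _ _))
  | expbel i χ ih =>
    intro ψ h
    rcases Set.mem_insert_iff.mp h with rfl | h
    · exact subset_rfl
    · exact (ih ψ h).trans (Set.subset_insert _ _)
  | impbel i χ ih =>
    intro ψ h
    rcases Set.mem_insert_iff.mp h with rfl | h
    · exact subset_rfl
    · exact (ih ψ h).trans (Set.subset_insert _ _)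

lemma sub_closed (φ : Frm Agt) : SubClosed (sub φ) := by
  refine ⟨?_, ?_, ?_, ?_⟩
  · intro ψ h
    exact sub_trans φ _ h (by simp [sub, self_mem_sub])
  · intro ψ χ h
    constructor
    · exact sub_trans φ _ h (by simp [sub, self_mem_sub])
    · exact sub_trans φ _ h (by simp [sub, self_mem_sub])
  · intro i ψ h
    exact sub_trans φ _ h (by simp [sub, self_mem_sub])
  · intro i ψ h
    exact sub_trans φ _ h (by simp [sub, self_mem_sub])

lemma isL0_isL : ∀ φ : Frm Agt, φ.isL0 → φ.isL := by
  intro φ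
  induction φ <;> simp_all [Frm.isL0, Frm.isL]

lemma isL_of_mem_sub : ∀ φ ψ : Frm Agt, φ.isL → ψ ∈ sub φ → ψ.isL := by
  intro φ
  induction φ with
  | atom p =>
    intro ψ h hm; simp only [sub, Set.mem_singleton_iff] at hm; subst hm; exact h
  | neg χ ih =>
    intro ψ h hm
    rcases Set.mem_insert_iff.mp hm with rfl | hm
    · exact h
    · exact ih ψ h hm
  | and χ₁ χ₂ ih1 ih2 =>
    intro ψ h hm
    rcases Set.mem_insert_iff.mp hm with rfl | hm
    · exact h
    · rcases hm with hm | hm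
      · exact ih1 ψ h.1 hm
      · exact ih2 ψ h.2 hm
  | expbel i χ ih =>
    intro ψ h hm
    rcases Set.mem_insert_iff.mp hm with rfl | hm
    · exact h
    · exact ih ψ (isL0_isL χ h) hm
  | impbel i χ ih =>
    intro ψ h hm
    rcases Set.mem_insert_iff.mp hm with rfl | hm
    · exact h
    · exact ih ψ h hm

/-- The filtration model used for the finite model property. -/
def fModel (M : PreNDM Agt) (S : Set (Frm Agt)) : PreNDM Agt where
  W := Quotient (filtSetoid M S)
  D := fun i x =>
    {α | Frm.expbel i α ∈ S ∧ ∃ w : M.W, filtMk M S w = x ∧ M.sat w (Frm.expbel i α)}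
  N := fun i x =>
    {y | ∃ w v : M.W, filtMk M S w = x ∧ filtMk M S v = y ∧ v ∈ M.N i w}
  V := fun p =>
    {x | Frm.atom p ∈ S ∧ ∃ w : M.W, filtMk M S w = x ∧ M.sat w (Frm.atom p)}

lemma filt_exact {M : PreNDM Agt} {S : Set (Frm Agt)} {w v : M.W}
    (h : filtMk M S w = filtMk M S v) : filtRel M S w v :=
  Quotient.exact h

/-- Truth lemma for the filtration. -/
lemma truth (M : PreNDM Agt) (S : Set (Frm Agt)) (hS : SubClosed S) :
    ∀ ψ : Frm Agt, ψ ∈ S → ∀ w : M.W,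
      ((fModel M S).sat (filtMk M S w) ψ ↔ M.sat w ψ) := by
  intro ψ
  induction ψ with
  | atom p =>
    intro hmem w
    constructor
    · rintro ⟨-, w', hw', hsat⟩
      exact (filt_exact hw' (Frm.atom p) hmem).mp hsat
    · intro h
      exact ⟨hmem, w, rfl, h⟩
  | neg χ ih =>
    intro hmem w
    have := ih (hS.1 χ hmem) w
    simp only [PreNDM.sat]
    tauto
  | and χ₁ χ₂ ih1 ih2 =>
    intro hmem w
    have h1 := ih1 (hS.2.1 χ₁ χ₂ hmem).1 w
    have h2 := ih2 (hS.2.1 χ₁ χ₂ hmem).2 w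
    simp only [PreNDM.sat]
    tauto
  | expbel i χ ih =>
    intro hmem w
    show (χ ∈ (fModel M S).D i (filtMk M S w)) ↔ (χ ∈ M.D i w)
    constructor
    · rintro ⟨-, w', hw', hsat⟩
      exact (filt_exact hw' (Frm.expbel i χ) hmem).mp hsat
    · intro h
      exact ⟨hmem, w, rfl, h⟩
  | impbel i χ ih =>
    intro hmem w
    have hχ : χ ∈ S := hS.2.2.2 i χ hmem
    constructor
    · intro h v hv
      have := h (filtMk M S v) ⟨w, v, rfl, rfl, hv⟩
      exact (ih hχ v).mp this
    · intro h y hy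
      rcases hy with ⟨w', v, hw', hv, hN⟩
      have hww' : M.sat w' (Frm.impbel i χ) :=
        (filt_exact hw' (Frm.impbel i χ) hmem).mpr h
      have := hww' v hN
      rw [← hv]
      exact (ih hχ v).mpr this

lemma fW_finite (M : PreNDM Agt) (S : Set (Frm Agt)) (hS : S.Finite) :
    Finite (Quotient (filtSetoid M S)) := by
  have : Finite S := hS.to_subtype
  refine Finite.of_injective
    (fun x => Quotient.lift (fun w (ψ : S) => M.sat w ψ.val) ?_ x) ?_
  · intro a b hab
    funext ψ
    exact propext (hab ψ.val ψ.2)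
  · intro x y hxy
    induction x using Quotient.ind with | _ a =>
    induction y using Quotient.ind with | _ b =>
    apply Quotient.sound
    intro ψ hψ
    exact iff_of_eq (congrFun hxy ⟨ψ, hψ⟩)

end FMPAux

end LDAPaper

namespace LDAPaper

open FMPAux in
/-- **Finite model property for quasi-NDMs.** A formula `φ ∈ L` is satisfiable for
the class of quasi-NDMs iff it is satisfiable for the class of finite quasi-NDMs. -/
theorem fmp_quasi_ndm (Agt : Type) [Fintype Agt] (φ : Frm Agt) (hφ : φ.isL) :
    (∃ M : PreNDM Agt, isQNDM M ∧ ∃ w : M.W, M.sat w φ) ↔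
      (∃ M : PreNDM Agt, isQNDM M ∧ finiteModel M ∧ ∃ w : M.W, M.sat w φ) := by
  constructor
  · rintro ⟨M, hM, w, hw⟩
    set S := FMPAux.sub φ with hSdef
    have hclosed := FMPAux.sub_closed φ
    have hfin := FMPAux.sub_finite φ
    refine ⟨FMPAux.fModel M S, ⟨?_, ?_, ?_⟩, ⟨FMPAux.fW_finite M S hfin, ?_, ?_⟩, ?_⟩
    · rintro i x α ⟨hmem, -⟩
      exact FMPAux.isL_of_mem_sub φ (Frm.expbel i α) hφ hmem
    · rintro i x y ⟨w', v, hw', hv, hN⟩ α ⟨hmem, w₀, hw₀, hsat₀⟩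
      have hsat' : M.sat w' (Frm.expbel i α) :=
        (FMPAux.filt_exact (hw₀.trans hw'.symm) _ hmem).mp hsat₀
      have hvα : M.sat v α := hM.2.1 i w' v hN α hsat'
      have hα : α ∈ S := hclosed.2.2.1 i α hmem
      rw [← hv]
      exact (FMPAux.truth M S hclosed α hα v).mpr hvα
    · intro i x
      obtain ⟨w', rfl⟩ := Quotient.exists_rep x
      obtain ⟨v, hv⟩ := hM.2.2 i w'
      exact ⟨filtMk M S v, w', v, rfl, rfl, hv⟩
    · intro i x
      have hsub : (FMPAux.fModel M S).D i x ⊆ (fun α => Frm.expbel i α) ⁻¹' S :=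
        fun α h => h.1
      exact ((hfin.preimage (fun a _ b _ h => by injection h)).subset hsub)
    · intro x
      have hsub : {p : ℕ | x ∈ (FMPAux.fModel M S).V p} ⊆ (Frm.atom : ℕ → Frm Agt) ⁻¹' S :=
        fun p h => h.1
      exact ((hfin.preimage (fun a _ b _ h => by injection h)).subset hsub)
    · exact ⟨filtMk M S w, (FMPAux.truth M S hclosed φ (FMPAux.self_mem_sub φ) w).mpr hw⟩
  · rintro ⟨M, h1, h2, w, hw⟩
    exact ⟨M, h1, w, hw⟩

end LDAPaper
end

section
/- A formula φ ∈ L is satisfiable for the class of finite notional doxastic models if and only if φ is satisfiable for the class of finite quasi-notional doxastic models. -/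
/-!
A quasi-NDM fails (C1) only because a belief base `D(i,w)` may be too weak to carve out
`N(i,w)`. Adding to each `D(i,w)` a fresh atom `q_(i,w)` that is true exactly on `N(i,w)`
forces (C1), since `N(i,w)` already lies inside every old `‖α‖`. Formulas not mentioning
fresh atoms keep their truth values: for `△ᵢ α` because the added atom is not such an `α`.
In a finite model only finitely many atoms occur in `φ` and the belief bases, so fresh atoms
exist, and only finitely many are needed, so the valuation stays finite.
-/

theorem Set.Finite.exists_injective_nat_forall_notMem (α : Type*) [Countable α] {A : Set ℕ}
    (hA : A.Finite) : ∃ code : α → ℕ, Function.Injective code ∧ ∀ x, code x ∉ A := by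
  obtain ⟨f, hf⟩ := Countable.exists_injective_nat α
  let g := hA.infinite_compl.natEmbedding
  exact ⟨fun x => g (f x), fun x y h => hf (g.injective (Subtype.ext h)), fun x => (g (f x)).2⟩

namespace LDAPaper

variable {Agt : Type}

theorem Frm.atomsOf_finite (ψ : Frm Agt) : ψ.atomsOf.Finite := by
  induction ψ with
  | atom p => exact Set.finite_singleton p
  | neg _ ih | expbel _ _ ih | impbel _ _ ih => exact ih
  | and _ _ ih₁ ih₂ => exact ih₁.union ih₂

theorem isNDM.isQNDM {M : PreNDM Agt} (hM : isNDM M) : isQNDM M := by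
  obtain ⟨hL0, hC1, hC2⟩ := hM
  refine ⟨hL0, fun i w v hv => ?_, hC2⟩
  rw [hC1 i w] at hv
  exact hv

namespace PreNDM

def beliefAtoms (M : PreNDM Agt) : Set ℕ := ⋃ i, ⋃ w, ⋃ α ∈ M.D i w, α.atomsOf

theorem atomsOf_subset_beliefAtoms (M : PreNDM Agt) {i : Agt} {w : M.W} {α : Frm Agt}
    (hα : α ∈ M.D i w) : α.atomsOf ⊆ M.beliefAtoms :=
  fun _ hp => Set.mem_iUnion.2 ⟨i, Set.mem_iUnion.2 ⟨w, Set.mem_biUnion hα hp⟩⟩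

theorem beliefAtoms_finite [Finite Agt] {M : PreNDM Agt} (hM : finiteModel M) :
    M.beliefAtoms.Finite := by
  obtain ⟨_, hD, -⟩ := hM
  exact Set.finite_iUnion fun i => Set.finite_iUnion fun w =>
    (hD i w).biUnion fun α _ => α.atomsOf_finite

def nameNotional (M : PreNDM Agt) (A : Set ℕ) (code : Agt × M.W → ℕ) : PreNDM Agt where
  W := M.W
  D i w := insert (.atom (code (i, w))) (M.D i w)
  N := M.N
  V p := {v | p ∈ A ∧ v ∈ M.V p} ∪ {v | ∃ i w, code (i, w) = p ∧ v ∈ M.N i w}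

variable {M : PreNDM Agt} {A : Set ℕ} {code : Agt × M.W → ℕ}

theorem sat_nameNotional_atom_code (hcode : Function.Injective code)
    (hfresh : ∀ x, code x ∉ A) (i : Agt) (w v : M.W) :
    (M.nameNotional A code).sat v (.atom (code (i, w))) ↔ v ∈ M.N i w := by
  change (code (i, w) ∈ A ∧ v ∈ M.V _) ∨ (∃ i' w', code (i', w') = code (i, w) ∧ v ∈ M.N i' w')
    ↔ v ∈ M.N i w
  rw [or_iff_right fun h => hfresh _ h.1]
  constructor
  · rintro ⟨i', w', h, hv⟩
    cases hcode h
    exact hv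
  · exact fun hv => ⟨i, w, rfl, hv⟩

theorem sat_nameNotional_iff (hfresh : ∀ x, code x ∉ A) {ψ : Frm Agt} (hψ : ψ.atomsOf ⊆ A)
    (w : M.W) : (M.nameNotional A code).sat w ψ ↔ M.sat w ψ := by
  induction ψ generalizing w with
  | atom p =>
    have hp : p ∈ A := hψ rfl
    change (p ∈ A ∧ w ∈ M.V p) ∨ (∃ i w', code (i, w') = p ∧ w ∈ M.N i w') ↔ w ∈ M.V p
    rw [and_iff_right hp]
    refine or_iff_left ?_
    rintro ⟨i, w', rfl, -⟩
    exact hfresh _ hp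
  | neg φ ih => exact not_congr (ih hψ w)
  | and φ χ ih₁ ih₂ =>
    exact and_congr (ih₁ (Set.union_subset_iff.1 hψ).1 w) (ih₂ (Set.union_subset_iff.1 hψ).2 w)
  | expbel i α =>
    refine or_iff_right ?_
    rintro rfl
    exact hfresh _ (hψ rfl)
  | impbel i φ ih => exact forall₂_congr fun v _ => ih hψ v

theorem isNDM_nameNotional (hM : isQNDM M) (hA : M.beliefAtoms ⊆ A)
    (hcode : Function.Injective code) (hfresh : ∀ x, code x ∉ A) :
    isNDM (M.nameNotional A code) := by
  obtain ⟨hL0, hC1, hC2⟩ := hM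
  refine ⟨fun i (w : M.W) => ?_, fun i (w : M.W) => ?_, hC2⟩
  · rintro α (rfl | hα)
    exacts [trivial, hL0 i w α hα]
  · refine Set.ext fun v : M.W => ?_
    have hold : ∀ α ∈ M.D i w, (M.nameNotional A code).sat v α ↔ M.sat v α := fun α hα =>
      sat_nameNotional_iff hfresh ((M.atomsOf_subset_beliefAtoms hα).trans hA) v
    change v ∈ M.N i w ↔
      ∀ α ∈ insert (.atom (code (i, w))) (M.D i w), (M.nameNotional A code).sat v α
    rw [Set.forall_mem_insert, sat_nameNotional_atom_code hcode hfresh]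
    exact ⟨fun hv => ⟨hv, fun α hα => (hold α hα).2 (hC1 i w v hv α hα)⟩, And.left⟩

theorem finiteModel_nameNotional [Finite Agt] (hM : finiteModel M) :
    finiteModel (M.nameNotional A code) := by
  obtain ⟨hW, hD, hV⟩ := hM
  refine ⟨hW, fun i w => (hD i w).insert _, fun v => ?_⟩
  refine ((hV v).union (Set.finite_range code)).subset ?_
  rintro p (⟨-, hp⟩ | ⟨i, w, rfl, -⟩)
  exacts [Or.inl hp, Or.inr ⟨(i, w), rfl⟩]

end PreNDM

theorem finite_ndm_iff_finite_qndm_sat_general (Agt : Type) [Fintype Agt] (φ : Frm Agt) :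
    (∃ M : PreNDM Agt, isNDM M ∧ finiteModel M ∧ ∃ w : M.W, M.sat w φ) ↔
      (∃ M : PreNDM Agt, isQNDM M ∧ finiteModel M ∧ ∃ w : M.W, M.sat w φ) := by
  refine ⟨fun ⟨M, hM, hfin, w, hw⟩ => ⟨M, hM.isQNDM, hfin, w, hw⟩, ?_⟩
  rintro ⟨M, hM, hfin, w, hw⟩
  have : Finite M.W := hfin.1
  let A := φ.atomsOf ∪ M.beliefAtoms
  have hA : A.Finite := φ.atomsOf_finite.union (PreNDM.beliefAtoms_finite hfin)
  obtain ⟨code, hcode, hfresh⟩ := hA.exists_injective_nat_forall_notMem (Agt × M.W)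
  exact ⟨M.nameNotional A code,
    PreNDM.isNDM_nameNotional hM Set.subset_union_right hcode hfresh,
    PreNDM.finiteModel_nameNotional hfin, w,
    (PreNDM.sat_nameNotional_iff hfresh Set.subset_union_left w).2 hw⟩

/-- A formula `φ ∈ L` is satisfiable for the class of finite NDMs iff it is
satisfiable for the class of finite quasi-NDMs. -/
theorem finite_ndm_iff_finite_qndm_sat (Agt : Type) [Fintype Agt] (φ : Frm Agt)
    (hφ : φ.isL) :
    (∃ M : PreNDM Agt, isNDM M ∧ finiteModel M ∧ ∃ w : M.W, M.sat w φ) ↔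
      (∃ M : PreNDM Agt, isQNDM M ∧ finiteModel M ∧ ∃ w : M.W, M.sat w φ) :=
  finite_ndm_iff_finite_qndm_sat_general Agt φ

end LDAPaper
end

section
/- A formula φ ∈ L is satisfiable for the class of consistent multi-agent belief models (CMABs) if and only if φ is satisfiable for the class of notional doxastic models (NDMs). -/
/-!
Both directions are truth-preserving translations. An NDM yields a CMAB by reading off, at each
world, the doxastic sets and the valuation; (C1) makes the doxastic alternatives between these
bases coincide with the notional function, and (C2) gives consistency.

Conversely, the bases of a CMAB `(b, Cxt)` become worlds, but (C1) would then also make `b`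
an alternative whenever it satisfies a belief base, although `□ᵢ` only ranges over `Cxt`. To
repair this, each `α` in agent `i`'s belief set is accompanied by `△ᵢ (marker K α)`, where
`marker K α` is a tautology of size above `K = |φ|` that agent `i` believes at `u` exactly when
`u ∈ Cxt` and `u` satisfies `α`. Beliefs of size at least `K` are dropped, since the markers may
change their truth value; `φ` cannot see them, and their markers still constrain the notional sets.
-/

namespace LDAPaper

variable {Agt : Type}

namespace Frm

def size : Frm Agt → ℕ
  | atom _ => 1
  | neg α => α.size + 1
  | and α β => α.size + β.size + 1
  | expbel _ α => α.size + 1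
  | impbel _ α => α.size + 1

lemma size_neg_iterate (n : ℕ) (α : Frm Agt) : (neg^[n] α).size = α.size + n := by
  induction n with
  | zero => rfl
  | succ n ih => rw [Function.iterate_succ_apply', size, ih, Nat.add_assoc]

lemma neg_injective : Function.Injective (neg : Frm Agt → Frm Agt) :=
  fun _ _ h => neg.inj h

lemma isL0_neg_iterate {α : Frm Agt} (hα : α.isL0) (n : ℕ) : (neg^[n] α).isL0 := by
  induction n with
  | zero => exact hα
  | succ n ih => rw [Function.iterate_succ_apply']; exact ih

lemma isL_of_isL0 {α : Frm Agt} (hα : α.isL0) : α.isL := by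
  induction α with
  | atom => trivial
  | neg _ ih => exact ih hα
  | and _ _ ih₁ ih₂ => exact ⟨ih₁ hα.1, ih₂ hα.2⟩
  | expbel => exact hα
  | impbel => exact hα.elim

def verum (α : Frm Agt) : Frm Agt := neg (and α (neg α))

lemma verum_injective : Function.Injective (verum : Frm Agt → Frm Agt) := by
  intro α β h
  injection h with h
  injection h

lemma isL0_verum {α : Frm Agt} (hα : α.isL0) : (verum α).isL0 := ⟨hα, hα⟩

def top : Frm Agt := verum (atom 0)

lemma isL0_top : (top : Frm Agt).isL0 := isL0_verum trivial

def marker (K : ℕ) (α : Frm Agt) : Frm Agt := verum (neg^[K] α)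

lemma marker_injective (K : ℕ) : Function.Injective (marker (Agt := Agt) K) :=
  verum_injective.comp (neg_injective.iterate K)

lemma lt_size_marker (K : ℕ) (α : Frm Agt) : K < (marker K α).size := by
  simp only [marker, verum, size, size_neg_iterate]
  omega

lemma isL0_marker (K : ℕ) {α : Frm Agt} (hα : α.isL0) : (marker K α).isL0 :=
  isL0_verum (isL0_neg_iterate hα K)

lemma marker_ne_expbel (K : ℕ) (α : Frm Agt) (i : Agt) (β : Frm Agt) :
    marker K α ≠ expbel i β := by
  simp [marker, verum]

end Frm

lemma PreNDM.sat_verum (M : PreNDM Agt) (w : M.W) (α : Frm Agt) : M.sat w (Frm.verum α) := by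
  simp only [Frm.verum, PreNDM.sat]
  tauto

lemma MABase.bsat_verum (b : MABase Agt) (α : Frm Agt) : b.bsat (Frm.verum α) := by
  simp only [Frm.verum, MABase.bsat]
  tauto

lemma msat_iff_bsat (Cxt : Set (MABase Agt)) (b : MABase Agt) {α : Frm Agt} (hα : α.isL0) :
    msat Cxt b α ↔ b.bsat α := by
  induction α with
  | atom => rfl
  | neg _ ih => exact not_congr (ih hα)
  | and _ _ ih₁ ih₂ => exact and_congr (ih₁ hα.1) (ih₂ hα.2)
  | expbel => rfl
  | impbel => exact hα.elim

namespace PreNDM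

def toBase (M : PreNDM Agt) (v : M.W) : MABase Agt := ⟨fun i => M.D i v, {p | v ∈ M.V p}⟩

variable {M : PreNDM Agt}

lemma sat_iff_bsat_toBase (v : M.W) {α : Frm Agt} (hα : α.isL0) :
    M.sat v α ↔ (M.toBase v).bsat α := by
  induction α with
  | atom => rfl
  | neg _ ih => exact not_congr (ih hα)
  | and _ _ ih₁ ih₂ => exact and_congr (ih₁ hα.1) (ih₂ hα.2)
  | expbel => rfl
  | impbel => exact hα.elim

lemma R_toBase_iff (hM : isNDM M) (i : Agt) (v u : M.W) :
    MABase.R i (M.toBase v) (M.toBase u) ↔ u ∈ M.N i v := by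
  rw [hM.2.1 i v]
  exact forall₂_congr fun α hα => (sat_iff_bsat_toBase u (hM.1 i v α hα)).symm

lemma msat_toBase_iff (hM : isNDM M) {ψ : Frm Agt} (hψ : ψ.isL) (v : M.W) :
    msat (Set.range M.toBase) (M.toBase v) ψ ↔ M.sat v ψ := by
  induction ψ generalizing v with
  | atom => rfl
  | neg _ ih => exact not_congr (ih hψ v)
  | and _ _ ih₁ ih₂ => exact and_congr (ih₁ hψ.1 v) (ih₂ hψ.2 v)
  | expbel => rfl
  | impbel i _ ih =>
      simp only [msat, sat, Set.forall_mem_range, R_toBase_iff hM]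
      exact forall_congr' fun u => imp_congr_right fun _ => ih hψ u

lemma isCMAB_toBase (hM : isNDM M) (w : M.W) : isCMAB (M.toBase w) (Set.range M.toBase) := by
  rw [isCMAB, Set.insert_eq_of_mem (Set.mem_range_self w)]
  simp only [Set.forall_mem_range, Set.exists_range_iff, R_toBase_iff hM]
  exact ⟨fun v i => hM.1 i v, fun i v => hM.2.2 i v⟩

end PreNDM

/-- The marker of the tautology `top` keeps the alternatives inside `Cxt` even when `v.B i` is
empty. -/
def markedD (K : ℕ) (Cxt : Set (MABase Agt)) (i : Agt) (v : MABase Agt) : Set (Frm Agt) :=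
  {α ∈ v.B i | α.size < K} ∪
  (fun α => .expbel i (Frm.marker K α)) '' insert Frm.top (v.B i) ∪
  {γ | v ∈ Cxt ∧ ∃ α, α.isL0 ∧ v.bsat α ∧ γ = Frm.marker K α}

section markedD

variable {K : ℕ} {Cxt : Set (MABase Agt)} {i : Agt} {v : MABase Agt}

lemma mem_markedD_of_size_lt {β : Frm Agt} (hβ : β.size < K) :
    β ∈ markedD K Cxt i v ↔ β ∈ v.B i := by
  refine ⟨?_, fun h => Or.inl (Or.inl ⟨h, hβ⟩)⟩
  rintro ((⟨h, -⟩ | ⟨α, -, rfl⟩) | ⟨-, α, -, -, rfl⟩)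
  · exact h
  · exact absurd ((Frm.lt_size_marker K α).trans (Nat.lt_succ_self _)) hβ.not_gt
  · exact absurd (Frm.lt_size_marker K α) hβ.not_gt

lemma marker_mem_markedD {α : Frm Agt} (hα : α.isL0) :
    Frm.marker K α ∈ markedD K Cxt i v ↔ v ∈ Cxt ∧ v.bsat α := by
  refine ⟨?_, fun ⟨hv, h⟩ => Or.inr ⟨hv, α, hα, h, rfl⟩⟩
  rintro ((⟨-, h⟩ | ⟨β, -, h⟩) | ⟨hv, β, -, hβ, h⟩)
  · exact absurd (Frm.lt_size_marker K α) h.not_gt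
  · exact absurd h.symm (Frm.marker_ne_expbel K α i _)
  · exact ⟨hv, Frm.marker_injective K h ▸ hβ⟩

lemma isL0_of_mem_markedD (hv : v.wf) {γ : Frm Agt} (hγ : γ ∈ markedD K Cxt i v) :
    γ.isL0 := by
  rcases hγ with ((⟨h, -⟩ | ⟨α, hα, rfl⟩) | ⟨-, α, hα, -, rfl⟩)
  · exact hv i γ h
  · rcases hα with rfl | hα
    exacts [Frm.isL0_marker K Frm.isL0_top, Frm.isL0_marker K (hv i α hα)]
  · exact Frm.isL0_marker K hα

end markedD

def cmabModel (K : ℕ) (b : MABase Agt) (Cxt : Set (MABase Agt)) : PreNDM Agt where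
  W := ↥(insert b Cxt)
  D i v := markedD K Cxt i v
  N i v := {u | ↑u ∈ Cxt ∧ MABase.R i v u}
  V p := {v | p ∈ v.1.V}

section cmabModel

variable {K : ℕ} {b : MABase Agt} {Cxt : Set (MABase Agt)}

lemma sat_cmabModel_iff {ψ : Frm Agt} (hψ : ψ.isL) (hs : ψ.size ≤ K)
    (v : (cmabModel K b Cxt).W) : (cmabModel K b Cxt).sat v ψ ↔ msat Cxt v.1 ψ := by
  induction ψ generalizing v with
  | atom => rfl
  | neg _ ih => exact not_congr (ih hψ (by simp only [Frm.size] at hs; omega) v)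
  | and _ _ ih₁ ih₂ =>
      simp only [Frm.size] at hs
      exact and_congr (ih₁ hψ.1 (by omega) v) (ih₂ hψ.2 (by omega) v)
  | expbel => exact mem_markedD_of_size_lt (by simp only [Frm.size] at hs; omega)
  | impbel i _ ih =>
      simp only [Frm.size] at hs
      constructor
      · intro H u hu hR
        exact (ih hψ (by omega) ⟨u, Set.mem_insert_of_mem b hu⟩).1 (H _ ⟨hu, hR⟩)
      · rintro H u ⟨hu, hR⟩
        exact (ih hψ (by omega) u).2 (H u.1 hu hR)

lemma sat_cmabModel_iff_bsat (u : (cmabModel K b Cxt).W) {α : Frm Agt} (hα : α.isL0)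
    (hs : α.size ≤ K) : (cmabModel K b Cxt).sat u α ↔ u.1.bsat α :=
  (sat_cmabModel_iff (Frm.isL_of_isL0 hα) hs u).trans (msat_iff_bsat Cxt u.1 hα)

lemma N_cmabModel_eq (hwf : ∀ v ∈ insert b Cxt, MABase.wf v) (i : Agt)
    (v : (cmabModel K b Cxt).W) :
    (cmabModel K b Cxt).N i v =
      {u | ∀ α ∈ (cmabModel K b Cxt).D i v, (cmabModel K b Cxt).sat u α} := by
  have hmark {α : Frm Agt} (hα : α.isL0) (u : (cmabModel K b Cxt).W) :
      (cmabModel K b Cxt).sat u (.expbel i (Frm.marker K α)) ↔ u.1 ∈ Cxt ∧ u.1.bsat α :=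
    marker_mem_markedD hα
  ext u
  refine ⟨?_, fun H => ⟨?_, fun α hα => ?_⟩⟩
  · rintro ⟨hu, hR⟩ γ ((⟨hγ, hs⟩ | ⟨α, hα, rfl⟩) | ⟨-, α, -, -, rfl⟩)
    · exact (sat_cmabModel_iff_bsat u (hwf v.1 v.2 i γ hγ) hs.le).2 (hR γ hγ)
    · rcases hα with rfl | hα
      · exact (hmark Frm.isL0_top u).2 ⟨hu, MABase.bsat_verum _ _⟩
      · exact (hmark (hwf v.1 v.2 i α hα) u).2 ⟨hu, hR α hα⟩
    · exact PreNDM.sat_verum _ u _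
  · exact ((hmark Frm.isL0_top u).1 (H _ (Or.inl (Or.inr ⟨_, Set.mem_insert _ _, rfl⟩)))).1
  · exact ((hmark (hwf v.1 v.2 i α hα) u).1
      (H _ (Or.inl (Or.inr ⟨α, Set.mem_insert_of_mem _ hα, rfl⟩)))).2

lemma isNDM_cmabModel (h : isCMAB b Cxt) : isNDM (cmabModel K b Cxt) := by
  refine ⟨fun i v _ hγ => isL0_of_mem_markedD (h.1 v.1 v.2) hγ, N_cmabModel_eq h.1,
    fun i v => ?_⟩
  obtain ⟨u, hu, hR⟩ := h.2 i v.1 v.2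
  exact ⟨⟨u, Set.mem_insert_of_mem b hu⟩, hu, hR⟩

end cmabModel

theorem cmab_iff_ndm_sat_general (Agt : Type) (φ : Frm Agt) (hφ : φ.isL) :
    (∃ (b : MABase Agt) (Cxt : Set (MABase Agt)), isCMAB b Cxt ∧ msat Cxt b φ) ↔
      (∃ M : PreNDM Agt, isNDM M ∧ ∃ w : M.W, M.sat w φ) := by
  constructor
  · rintro ⟨b, Cxt, hb, hφb⟩
    exact ⟨cmabModel φ.size b Cxt, isNDM_cmabModel hb, ⟨b, Set.mem_insert b Cxt⟩,
      (sat_cmabModel_iff hφ le_rfl _).2 hφb⟩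
  · rintro ⟨M, hM, w, hw⟩
    exact ⟨M.toBase w, Set.range M.toBase, M.isCMAB_toBase hM w,
      (M.msat_toBase_iff hM hφ w).2 hw⟩

/-- A formula `φ ∈ L` is satisfiable for the class of consistent multi-agent belief
models (CMABs) iff it is satisfiable for the class of notional doxastic models. -/
theorem cmab_iff_ndm_sat (Agt : Type) [Fintype Agt] (φ : Frm Agt) (hφ : φ.isL) :
    (∃ (b : MABase Agt) (Cxt : Set (MABase Agt)), isCMAB b Cxt ∧ msat Cxt b φ) ↔
      (∃ M : PreNDM Agt, isNDM M ∧ ∃ w : M.W, M.sat w φ) :=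
  cmab_iff_ndm_sat_general Agt φ hφ

end LDAPaper
end

section
/- The canonical model M^c of the logic LDA is a quasi-notional doxastic model; i.e., for all agents i and all worlds w of M^c, N^c(i,w) ⊆ ∩_{α ∈ D^c(i,w)} ||α||_{M^c} (condition C1*) and N^c(i,w) ≠ ∅ (condition C2). -/
namespace LDAPaper
section Helpers
variable {Agt : Type}

@[simp] lemma boolEval_neg (v : Frm Agt → Bool) (φ : Frm Agt) :
    boolEval v (Frm.neg φ) = !boolEval v φ := rfl
@[simp] lemma boolEval_and (v : Frm Agt → Bool) (φ ψ : Frm Agt) :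
    boolEval v (Frm.and φ ψ) = (boolEval v φ && boolEval v ψ) := rfl
@[simp] lemma boolEval_atom (v : Frm Agt → Bool) (p : ℕ) :
    boolEval v (Frm.atom p : Frm Agt) = v (Frm.atom p) := rfl

@[simp] lemma isL_neg (φ : Frm Agt) : (Frm.neg φ).isL = φ.isL := rfl
@[simp] lemma isL_and (φ ψ : Frm Agt) : (Frm.and φ ψ).isL = (φ.isL ∧ ψ.isL) := rfl
@[simp] lemma isL_atom (p : ℕ) : (Frm.atom p : Frm Agt).isL = True := rfl
@[simp] lemma isL_expbel (i : Agt) (α : Frm Agt) : (Frm.expbel i α).isL = α.isL0 := rfl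
@[simp] lemma isL_impbel (i : Agt) (φ : Frm Agt) : (Frm.impbel i φ).isL = φ.isL := rfl
@[simp] lemma isL_imp (φ ψ : Frm Agt) : (φ.imp ψ).isL = (φ.isL ∧ ψ.isL) := by
  simp [Frm.imp]

lemma isL0_isL {α : Frm Agt} (h : α.isL0) : α.isL := by
  induction α with
  | atom p => trivial
  | neg α ih => exact ih h
  | and α β ih1 ih2 => exact ⟨ih1 h.1, ih2 h.2⟩
  | expbel i α ih => exact h
  | impbel i α ih => exact h.elim

lemma lda_isL {φ : Frm Agt} (h : LDA φ) : φ.isL := by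
  induction h with
  | taut h _ => exact h
  | @axK i φ ψ hφ hψ => simp [hφ, hψ]
  | axD i hφ => simp [hφ]
  | axInt i hα => simpa using ⟨hα, isL0_isL hα⟩
  | mp _ _ ih1 _ => rw [isL_imp] at ih1; exact ih1.2
  | nec i _ ih => exact ih

end Helpers
section Taut
variable {Agt : Type} {a b c : Frm Agt}

lemma t_and_left (ha : a.isL) (hb : b.isL) : LDA ((a.and b).imp a) :=
  LDA.taut (by simp [ha, hb]) (by
    intro v; simp only [Frm.imp, boolEval_neg, boolEval_and]
    cases boolEval v a <;> cases boolEval v b <;> rfl)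

lemma t_and_right (ha : a.isL) (hb : b.isL) : LDA ((a.and b).imp b) :=
  LDA.taut (by simp [ha, hb]) (by
    intro v; simp only [Frm.imp, boolEval_neg, boolEval_and]
    cases boolEval v a <;> cases boolEval v b <;> rfl)

lemma t_and_intro (ha : a.isL) (hb : b.isL) : LDA (a.imp (b.imp (a.and b))) :=
  LDA.taut (by simp [ha, hb]) (by
    intro v; simp only [Frm.imp, boolEval_neg, boolEval_and]
    cases boolEval v a <;> cases boolEval v b <;> rfl)

lemma t_const (ha : a.isL) (hb : b.isL) : LDA (a.imp (b.imp a)) :=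
  LDA.taut (by simp [ha, hb]) (by
    intro v; simp only [Frm.imp, boolEval_neg, boolEval_and]
    cases boolEval v a <;> cases boolEval v b <;> rfl)

lemma t_trans (ha : a.isL) (hb : b.isL) (hc : c.isL) :
    LDA ((a.imp b).imp ((b.imp c).imp (a.imp c))) :=
  LDA.taut (by simp [ha, hb, hc]) (by
    intro v; simp only [Frm.imp, boolEval_neg, boolEval_and]
    cases boolEval v a <;> cases boolEval v b <;> cases boolEval v c <;> rfl)

lemma t_collect (ha : a.isL) (hb : b.isL) (hc : c.isL) :
    LDA ((c.imp a).imp ((c.imp b).imp (c.imp (a.and b)))) :=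
  LDA.taut (by simp [ha, hb, hc]) (by
    intro v; simp only [Frm.imp, boolEval_neg, boolEval_and]
    cases boolEval v a <;> cases boolEval v b <;> cases boolEval v c <;> rfl)

lemma t_incons (ha : a.isL) (hc : c.isL) :
    LDA ((c.imp a).imp ((c.imp (Frm.neg a)).imp (Frm.neg c))) :=
  LDA.taut (by simp [ha, hc]) (by
    intro v; simp only [Frm.imp, boolEval_neg, boolEval_and]
    cases boolEval v a <;> cases boolEval v c <;> rfl)

lemma t_contra (ha : a.isL) (hb : b.isL) :
    LDA ((a.imp b).imp ((Frm.neg b).imp (Frm.neg a))) :=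
  LDA.taut (by simp [ha, hb]) (by
    intro v; simp only [Frm.imp, boolEval_neg, boolEval_and]
    cases boolEval v a <;> cases boolEval v b <;> rfl)

lemma t_notand (ha : a.isL) (hb : b.isL) :
    LDA ((Frm.neg (a.and b)).imp (b.imp (Frm.neg a))) :=
  LDA.taut (by simp [ha, hb]) (by
    intro v; simp only [Frm.imp, boolEval_neg, boolEval_and]
    cases boolEval v a <;> cases boolEval v b <;> rfl)

lemma t_dne (ha : a.isL) : LDA ((Frm.neg (Frm.neg a)).imp a) :=
  LDA.taut (by simp [ha]) (by
    intro v; simp only [Frm.imp, boolEval_neg, boolEval_and]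
    cases boolEval v a <;> rfl)

lemma t_unbox (ha : a.isL) (hb : b.isL) (hc : c.isL) :
    LDA (b.imp (((a.and b).imp c).imp (a.imp c))) :=
  LDA.taut (by simp [ha, hb, hc]) (by
    intro v; simp only [Frm.imp, boolEval_neg, boolEval_and]
    cases boolEval v a <;> cases boolEval v b <;> cases boolEval v c <;> rfl)

lemma lda_imp_isL {φ ψ : Frm Agt} (h : LDA (φ.imp ψ)) : φ.isL ∧ ψ.isL := by
  have := lda_isL h; rwa [isL_imp] at this

lemma lda_imp_trans {φ ψ χ : Frm Agt} (h1 : LDA (φ.imp ψ)) (h2 : LDA (ψ.imp χ)) :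
    LDA (φ.imp χ) := by
  obtain ⟨hφ, hψ⟩ := lda_imp_isL h1
  obtain ⟨_, hχ⟩ := lda_imp_isL h2
  exact LDA.mp (LDA.mp (t_trans hφ hψ hχ) h1) h2

lemma lda_imp_of (ha : a.isL) {φ : Frm Agt} (h : LDA φ) : LDA (a.imp φ) :=
  LDA.mp (t_const (lda_isL h) ha) h

end Taut
section Conj
variable {Agt : Type}

lemma conj_isL {l : List (Frm Agt)} (h : ∀ ψ ∈ l, ψ.isL) : (conjList l).isL := by
  induction l with
  | nil => simp [conjList, Frm.isL]
  | cons a t ih =>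
      exact ⟨h a (by simp), ih fun ψ hψ => h ψ (by simp [hψ])⟩

lemma lda_conj_nil : LDA (conjList ([] : List (Frm Agt))) := by
  refine LDA.taut (by simp [conjList]) ?_
  intro v; simp only [conjList, boolEval_neg, boolEval_and, boolEval_atom]
  cases v (Frm.atom 0 : Frm Agt) <;> rfl

lemma lda_conj_mem {l : List (Frm Agt)} {ψ : Frm Agt} (hmem : ψ ∈ l)
    (hL : ∀ χ ∈ l, χ.isL) : LDA ((conjList l).imp ψ) := by
  induction l with
  | nil => simp at hmem
  | cons a t ih =>
      have ha : a.isL := hL a (by simp)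
      have ht : (conjList t).isL := conj_isL fun χ hχ => hL χ (by simp [hχ])
      rcases List.mem_cons.mp hmem with h | h
      · subst h; exact t_and_left ha ht
      · exact lda_imp_trans (t_and_right ha ht) (ih h fun χ hχ => hL χ (by simp [hχ]))

lemma lda_imp_conj {c : Frm Agt} {l : List (Frm Agt)} (hc : c.isL)
    (h : ∀ ψ ∈ l, LDA (c.imp ψ)) : LDA (c.imp (conjList l)) := by
  induction l with
  | nil => exact lda_imp_of hc lda_conj_nil
  | cons a t ih =>
      have h1 : LDA (c.imp a) := h a (by simp)
      have h2 : LDA (c.imp (conjList t)) := ih fun ψ hψ => h ψ (by simp [hψ])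
      have ha := (lda_imp_isL h1).2
      have ht := (lda_imp_isL h2).2
      exact LDA.mp (LDA.mp (t_collect ha ht hc) h1) h2

lemma lda_conj_append_left {l1 l2 : List (Frm Agt)} (hL : ∀ ψ ∈ l1 ++ l2, ψ.isL) :
    LDA ((conjList (l1 ++ l2)).imp (conjList l1)) :=
  lda_imp_conj (conj_isL hL) fun ψ hψ =>
    lda_conj_mem (by simp [hψ]) hL

lemma lda_conj_append_right {l1 l2 : List (Frm Agt)} (hL : ∀ ψ ∈ l1 ++ l2, ψ.isL) :
    LDA ((conjList (l1 ++ l2)).imp (conjList l2)) :=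
  lda_imp_conj (conj_isL hL) fun ψ hψ =>
    lda_conj_mem (by simp [hψ]) hL

/-- Derivability from a set of hypotheses (all required to be in `L`). -/
def derives (Γ : Set (Frm Agt)) (φ : Frm Agt) : Prop :=
  ∃ l : List (Frm Agt), (∀ ψ ∈ l, ψ ∈ Γ ∧ ψ.isL) ∧ LDA ((conjList l).imp φ)

lemma derives_of_lda {Γ : Set (Frm Agt)} {φ : Frm Agt} (h : LDA φ) : derives Γ φ :=
  ⟨[], by simp, lda_imp_of (conj_isL (by simp)) h⟩

lemma derives_mem {Γ : Set (Frm Agt)} {φ : Frm Agt} (h : φ ∈ Γ) (hL : φ.isL) :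
    derives Γ φ :=
  ⟨[φ], by simp [h, hL], lda_conj_mem (by simp) (by simp [hL])⟩

lemma derives_mp {Γ : Set (Frm Agt)} {φ ψ : Frm Agt}
    (h1 : derives Γ (φ.imp ψ)) (h2 : derives Γ φ) : derives Γ ψ := by
  obtain ⟨l1, hl1, hd1⟩ := h1
  obtain ⟨l2, hl2, hd2⟩ := h2
  have hL : ∀ χ ∈ l1 ++ l2, χ.isL := by
    intro χ hχ; rcases List.mem_append.mp hχ with h | h
    · exact (hl1 χ h).2
    · exact (hl2 χ h).2
  refine ⟨l1 ++ l2, ?_, ?_⟩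
  · intro χ hχ; rcases List.mem_append.mp hχ with h | h
    · exact hl1 χ h
    · exact hl2 χ h
  · have e1 : LDA ((conjList (l1 ++ l2)).imp (φ.imp ψ)) :=
      lda_imp_trans (lda_conj_append_left hL) hd1
    have e2 : LDA ((conjList (l1 ++ l2)).imp φ) :=
      lda_imp_trans (lda_conj_append_right hL) hd2
    have hC := conj_isL hL
    obtain ⟨hφ, hψ⟩ := lda_imp_isL hd1
    rw [isL_imp] at hψ
    -- S combinator as tautology
    have tS : LDA (((conjList (l1++l2)).imp (φ.imp ψ)).imp
        (((conjList (l1++l2)).imp φ).imp ((conjList (l1++l2)).imp ψ))) := by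
      refine LDA.taut (by simp [hC, hψ.1, hψ.2]) ?_
      intro v; simp only [Frm.imp, boolEval_neg, boolEval_and]
      cases boolEval v (conjList (l1++l2)) <;> cases boolEval v φ <;>
        cases boolEval v ψ <;> rfl
    exact LDA.mp (LDA.mp tS e1) e2

lemma derives_both_incons {Γ : Set (Frm Agt)} {φ : Frm Agt}
    (h1 : derives Γ φ) (h2 : derives Γ (Frm.neg φ)) : ¬ Consistent Γ := by
  obtain ⟨l1, hl1, hd1⟩ := h1
  obtain ⟨l2, hl2, hd2⟩ := h2
  have hL : ∀ χ ∈ l1 ++ l2, χ.isL := by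
    intro χ hχ; rcases List.mem_append.mp hχ with h | h
    · exact (hl1 χ h).2
    · exact (hl2 χ h).2
  intro hcon
  refine hcon (l1 ++ l2) ?_ ?_
  · intro χ hχ; rcases List.mem_append.mp hχ with h | h
    · exact (hl1 χ h).1
    · exact (hl2 χ h).1
  · have e1 : LDA ((conjList (l1 ++ l2)).imp φ) :=
      lda_imp_trans (lda_conj_append_left hL) hd1
    have e2 : LDA ((conjList (l1 ++ l2)).imp (Frm.neg φ)) :=
      lda_imp_trans (lda_conj_append_right hL) hd2
    obtain ⟨hC, hφ⟩ := lda_imp_isL e1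
    exact LDA.mp (LDA.mp (t_incons hφ hC) e1) e2

end Conj
section MCSLem
variable {Agt : Type}

lemma incons_exists {Γ : Set (Frm Agt)} (h : ¬ Consistent Γ) :
    ∃ l : List (Frm Agt), (∀ ψ ∈ l, ψ ∈ Γ) ∧ LDA (Frm.neg (conjList l)) := by
  unfold Consistent at h; push_neg at h; exact h

lemma insert_incons_derives_neg {Γ : Set (Frm Agt)} {φ : Frm Agt}
    (hφ : φ.isL) (hΓ : ∀ ψ ∈ Γ, ψ.isL)
    (h : ¬ Consistent (insert φ Γ)) : derives Γ (Frm.neg φ) := by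
  classical
  obtain ⟨l, hl, hd⟩ := incons_exists h
  set l' : List (Frm Agt) := l.filter (fun ψ => decide (ψ ∈ Γ)) with hl'
  have hl'mem : ∀ ψ ∈ l', ψ ∈ Γ ∧ ψ.isL := by
    intro ψ hψ
    have := List.mem_filter.mp hψ
    have hmem : ψ ∈ Γ := by simpa using this.2
    exact ⟨hmem, hΓ ψ hmem⟩
  have hlL : ∀ ψ ∈ l, ψ.isL := by
    intro ψ hψ
    rcases hl ψ hψ with h | h
    · exact h ▸ hφ
    · exact hΓ ψ h
  have hC : (φ.and (conjList l')).isL :=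
    ⟨hφ, conj_isL fun ψ hψ => (hl'mem ψ hψ).2⟩
  -- (φ ∧ conj l') → conj l
  have cover : LDA ((φ.and (conjList l')).imp (conjList l)) := by
    refine lda_imp_conj hC ?_
    intro ψ hψ
    rcases hl ψ hψ with h | h
    · subst h; exact t_and_left hφ hC.2
    · have : ψ ∈ l' := List.mem_filter.mpr ⟨hψ, by simpa using h⟩
      exact lda_imp_trans (t_and_right hφ hC.2)
        (lda_conj_mem this fun χ hχ => (hl'mem χ hχ).2)
  have hnC : LDA (Frm.neg (φ.and (conjList l'))) :=
    LDA.mp (LDA.mp (t_contra hC (conj_isL hlL)) cover) hd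
  have final : LDA ((conjList l').imp (Frm.neg φ)) :=
    LDA.mp (t_notand hφ hC.2) hnC
  exact ⟨l', hl'mem, final⟩

variable {Γ : Set (Frm Agt)} (hΓ : MCS Γ)

include hΓ

lemma mcs_isL {φ : Frm Agt} (h : φ ∈ Γ) : φ.isL := hΓ.1 φ h

lemma mcs_mem_of_derives {φ : Frm Agt} (hd : derives Γ φ) (hL : φ.isL) : φ ∈ Γ := by
  have hcon : Consistent (insert φ Γ) := by
    by_contra h
    exact derives_both_incons hd (insert_incons_derives_neg hL hΓ.1 h) hΓ.2.1
  have heq := hΓ.2.2 (insert φ Γ)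
    (by
      intro ψ hψ
      rcases hψ with h | h
      · exact h ▸ hL
      · exact hΓ.1 ψ h)
    hcon (Set.subset_insert _ _)
  rw [← heq]; exact Set.mem_insert _ _

lemma mcs_thm {φ : Frm Agt} (h : LDA φ) : φ ∈ Γ :=
  mcs_mem_of_derives hΓ (derives_of_lda h) (lda_isL h)

lemma mcs_mp {φ ψ : Frm Agt} (h : φ ∈ Γ) (himp : LDA (φ.imp ψ)) : ψ ∈ Γ :=
  mcs_mem_of_derives hΓ
    (derives_mp (derives_of_lda himp) (derives_mem h (lda_imp_isL himp).1))
    (lda_imp_isL himp).2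

lemma mcs_not_both {φ : Frm Agt} (h1 : φ ∈ Γ) (h2 : Frm.neg φ ∈ Γ) : False :=
  derives_both_incons (derives_mem h1 (hΓ.1 φ h1))
    (derives_mem h2 (hΓ.1 _ h2)) hΓ.2.1

lemma mcs_neg_iff {φ : Frm Agt} (hL : φ.isL) : Frm.neg φ ∈ Γ ↔ φ ∉ Γ := by
  constructor
  · intro h2 h1; exact mcs_not_both hΓ h1 h2
  · intro hn
    have hcon : Consistent (insert (Frm.neg φ) Γ) := by
      by_contra h
      have hd := insert_incons_derives_neg (by simpa using hL) hΓ.1 h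
      exact hn (mcs_mem_of_derives hΓ
        (derives_mp (derives_of_lda (t_dne hL)) hd) hL)
    have heq := hΓ.2.2 (insert (Frm.neg φ) Γ)
      (by
        intro ψ hψ
        rcases hψ with h | h
        · exact h ▸ (show (Frm.neg φ).isL by simpa using hL)
        · exact hΓ.1 ψ h)
      hcon (Set.subset_insert _ _)
    rw [← heq]; exact Set.mem_insert _ _

lemma mcs_and_mem {φ ψ : Frm Agt} (h1 : φ ∈ Γ) (h2 : ψ ∈ Γ) : Frm.and φ ψ ∈ Γ := by
  have hφ := hΓ.1 φ h1
  have hψ := hΓ.1 ψ h2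
  have step := mcs_mp hΓ h1 (t_and_intro hφ hψ)
  exact mcs_mem_of_derives hΓ
    (derives_mp (derives_mem step (by simp [hφ, hψ])) (derives_mem h2 hψ))
    (by simp [hφ, hψ])

lemma mcs_and_iff {φ ψ : Frm Agt} (hφ : φ.isL) (hψ : ψ.isL) :
    Frm.and φ ψ ∈ Γ ↔ φ ∈ Γ ∧ ψ ∈ Γ := by
  constructor
  · intro h
    exact ⟨mcs_mp hΓ h (t_and_left hφ hψ), mcs_mp hΓ h (t_and_right hφ hψ)⟩
  · intro ⟨h1, h2⟩; exact mcs_and_mem hΓ h1 h2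

end MCSLem
section Lindenbaum
variable {Agt : Type}

lemma chain_list {c : Set (Set (Frm Agt))} (hc : IsChain (· ⊆ ·) c)
    (hne : c.Nonempty) :
    ∀ l : List (Frm Agt), (∀ ψ ∈ l, ψ ∈ ⋃₀ c) → ∃ s ∈ c, ∀ ψ ∈ l, ψ ∈ s := by
  intro l
  induction l with
  | nil => exact fun _ => ⟨hne.choose, hne.choose_spec, by simp⟩
  | cons a t ih =>
      intro h
      obtain ⟨s1, hs1, hts1⟩ := ih fun ψ hψ => h ψ (by simp [hψ])
      obtain ⟨s2, hs2, has2⟩ := h a (by simp)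
      rcases eq_or_ne s1 s2 with heq | hne'
      · subst heq
        exact ⟨s1, hs1, by
          intro ψ hψ
          rcases List.mem_cons.mp hψ with h' | h'
          · exact h' ▸ has2
          · exact hts1 ψ h'⟩
      · rcases hc hs1 hs2 hne' with hsub | hsub
        · exact ⟨s2, hs2, by
            intro ψ hψ
            rcases List.mem_cons.mp hψ with h' | h'
            · exact h' ▸ has2
            · exact hsub (hts1 ψ h')⟩
        · exact ⟨s1, hs1, by
            intro ψ hψ
            rcases List.mem_cons.mp hψ with h' | h'
            · exact h' ▸ hsub has2
            · exact hts1 ψ h'⟩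

lemma lindenbaum (Δ : Set (Frm Agt)) (hL : ∀ φ ∈ Δ, φ.isL) (hc : Consistent Δ) :
    ∃ Γ : Set (Frm Agt), MCS Γ ∧ Δ ⊆ Γ := by
  set S : Set (Set (Frm Agt)) := {Δ' | (∀ φ ∈ Δ', φ.isL) ∧ Consistent Δ'} with hS
  have hzorn : ∀ c ⊆ S, IsChain (· ⊆ ·) c → c.Nonempty →
      ∃ ub ∈ S, ∀ s ∈ c, s ⊆ ub := by
    intro c hcS hchain hcne
    refine ⟨⋃₀ c, ⟨?_, ?_⟩, fun s hs => Set.subset_sUnion_of_mem hs⟩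
    · rintro φ ⟨s, hs, hφ⟩
      exact (hcS hs).1 φ hφ
    · intro l hl hd
      obtain ⟨s, hs, hls⟩ := chain_list hchain hcne l hl
      exact (hcS hs).2 l hls hd
  obtain ⟨m, hΔm, hmax⟩ := zorn_subset_nonempty S hzorn Δ ⟨hL, hc⟩
  refine ⟨m, ⟨hmax.prop.1, hmax.prop.2, ?_⟩, hΔm⟩
  intro Δ' hL' hc' hsub
  exact hmax.eq_of_ge (y := Δ') ⟨hL', hc'⟩ hsub

end Lindenbaum

section Boxes
variable {Agt : Type} {Γ : Set (Frm Agt)}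

lemma lda_box_mono {i : Agt} {φ ψ : Frm Agt} (h : LDA (φ.imp ψ)) :
    LDA ((Frm.impbel i φ).imp (Frm.impbel i ψ)) := by
  obtain ⟨hφ, hψ⟩ := lda_imp_isL h
  have hK := LDA.axK i hφ hψ
  have hnec := LDA.nec i h
  have tU := t_unbox (a := Frm.impbel i φ) (b := Frm.impbel i (φ.imp ψ))
    (c := Frm.impbel i ψ) (by simpa using hφ) (by simp [hφ, hψ]) (by simpa using hψ)
  exact LDA.mp (LDA.mp tU hnec) hK

lemma mcs_box_and (hΓ : MCS Γ) {i : Agt} {a c : Frm Agt}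
    (h1 : Frm.impbel i a ∈ Γ) (h2 : Frm.impbel i c ∈ Γ) :
    Frm.impbel i (a.and c) ∈ Γ := by
  have ha : a.isL := by simpa using hΓ.1 _ h1
  have hc : c.isL := by simpa using hΓ.1 _ h2
  have step : Frm.impbel i (c.imp (a.and c)) ∈ Γ :=
    mcs_mp hΓ h1 (lda_box_mono (t_and_intro ha hc))
  have hand := mcs_and_mem hΓ h2 step
  exact mcs_mp hΓ hand (LDA.axK i hc (by simp [ha, hc]))

lemma mcs_box_conj (hΓ : MCS Γ) {i : Agt} {l : List (Frm Agt)}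
    (h : ∀ ψ ∈ l, Frm.impbel i ψ ∈ Γ) : Frm.impbel i (conjList l) ∈ Γ := by
  induction l with
  | nil => exact mcs_thm hΓ (LDA.nec i lda_conj_nil)
  | cons a t ih =>
      exact mcs_box_and hΓ (h a (by simp)) (ih fun ψ hψ => h ψ (by simp [hψ]))

lemma canonN_consistent (hΓ : MCS Γ) (i : Agt) :
    Consistent {φ : Frm Agt | Frm.impbel i φ ∈ Γ} := by
  intro l hl hd
  have hbox : Frm.impbel i (conjList l) ∈ Γ := mcs_box_conj hΓ fun ψ hψ => hl ψ hψ
  have hnbox : Frm.impbel i (Frm.neg (conjList l)) ∈ Γ := mcs_thm hΓ (LDA.nec i hd)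
  have hand := mcs_and_mem hΓ hbox hnbox
  have hD := mcs_thm hΓ (LDA.axD i (φ := conjList l)
    (by simpa using hΓ.1 _ hbox))
  exact mcs_not_both hΓ hand hD

end Boxes
section Truth
variable {Agt : Type}

lemma truth0 (α : Frm Agt) (hα : α.isL0) (w : {Γ : Set (Frm Agt) // MCS Γ}) :
    (canonM Agt).sat w α ↔ α ∈ w.val := by
  induction α generalizing w with
  | atom p => exact Iff.rfl
  | neg β ih =>
      have hβ : β.isL0 := hα
      calc (canonM Agt).sat w (Frm.neg β) ↔ ¬ (canonM Agt).sat w β := Iff.rfl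
        _ ↔ β ∉ w.val := not_congr (ih hβ w)
        _ ↔ Frm.neg β ∈ w.val := (mcs_neg_iff w.prop (isL0_isL hβ)).symm
  | and β γ ih1 ih2 =>
      have hβ : β.isL0 := hα.1
      have hγ : γ.isL0 := hα.2
      calc (canonM Agt).sat w (Frm.and β γ)
          ↔ (canonM Agt).sat w β ∧ (canonM Agt).sat w γ := Iff.rfl
        _ ↔ β ∈ w.val ∧ γ ∈ w.val := and_congr (ih1 hβ w) (ih2 hγ w)
        _ ↔ Frm.and β γ ∈ w.val :=
            (mcs_and_iff w.prop (isL0_isL hβ) (isL0_isL hγ)).symm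
  | expbel i β ih => exact Iff.rfl
  | impbel i β ih => exact hα.elim

end Truth

/-- The canonical model `M^c` of LDA is a quasi-notional doxastic model: for all
agents `i` and worlds `w`, `N^c(i,w) ⊆ ∩_{α ∈ D^c(i,w)} ‖α‖` (C1*) and
`N^c(i,w) ≠ ∅` (C2). -/
theorem canonical_is_qndm (Agt : Type) [Fintype Agt] : isQNDM (canonM Agt) := by
  refine ⟨?_, ?_, ?_⟩
  · intro i w α hα
    exact w.prop.1 _ hα
  · intro i w v hv α hα
    have hL0 : α.isL0 := w.prop.1 _ hα
    have hbox : Frm.impbel i α ∈ w.val := mcs_mp w.prop hα (LDA.axInt i hL0)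
    exact (truth0 α hL0 v).mpr (hv α hbox)
  · intro i w
    have hcons := canonN_consistent w.prop i
    obtain ⟨Γ, hΓ, hsub⟩ := lindenbaum {φ : Frm Agt | Frm.impbel i φ ∈ w.val}
      (fun φ hφ => by simpa using w.prop.1 _ hφ) hcons
    exact ⟨⟨Γ, hΓ⟩, fun φ hφ => hsub hφ⟩

end LDAPaper
end
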